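/- Hyperdeterminantal representation of Aomoto's integral: Let n ≥ 1 and k ≥ 1 be integers, a, b > 0 real and y ∈ ℝ. Then 𝒜_n^{a,b;k}(y) = n! · Det(A), where A is the hypermatrix of order 2k and dimension n with entries A(i₁,…,i_{2k}) = B(a + s, b) · ( y − (a + s)/(a + b + s) ) with s = i₁+⋯+i_{2k}, for indices i₁,…,i_{2k} ∈ {0,…,n−1}. -/

import Mathlib

open MeasureTheory Nat

/-- The Vandermonde product `Δ(x) = ∏_{i<j} (x_j - x_i)`. -/
def vandermonde {n : ℕ} (x : Fin n → ℝ) : ℝ :=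
  ∏ p ∈ Finset.univ.filter (fun p : Fin n × Fin n => p.1 < p.2), (x p.2 - x p.1)

/-- Aomoto's integral `𝒜ₙ^{a,b;k}(y)` for integer exponent `k`. -/
noncomputable def aomoto (n k : ℕ) (a b y : ℝ) : ℝ :=
  ∫ x : Fin n → ℝ in Set.univ.pi (fun _ => Set.Icc (0:ℝ) 1),
    vandermonde x ^ (2 * k) * ∏ i, (y - x i) * x i ^ (a - 1) * (1 - x i) ^ (b - 1)

/-- The Euler Beta function `B(a,b) = ∫₀¹ x^{a-1} (1-x)^{b-1} dx`. -/
noncomputable def betaFn (a b : ℝ) : ℝ :=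
  ∫ x in (0:ℝ)..1, x ^ (a - 1) * (1 - x) ^ (b - 1)

/-- The hyperdeterminant of a hypermatrix of order `m` and dimension `n`. -/
noncomputable def hypDet {m n : ℕ} (M : (Fin m → Fin n) → ℝ) : ℝ :=
  (1 / (n ! : ℝ)) * ∑ σ : Fin m → Equiv.Perm (Fin n),
    (∏ s, ((Equiv.Perm.sign (σ s) : ℤ) : ℝ)) * ∏ i, M fun s => σ s i

/-! Expanding `Δ(x) = det (x_i ^ j)` by the Leibniz formula, `Δ(x) ^ (2k)` becomes a signed sum over
`2k`-tuples of permutations `σ` of the monomials `∏ᵢ xᵢ ^ (σ₁ i + ⋯ + σ₂ₖ i)`. The weight of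
Aomoto's integral is a product of one-variable weights, so by Fubini every term integrates to a
product of moments
`∫₀¹ (y - x) x ^ (a + e - 1) (1 - x) ^ (b - 1) dx = y B(a + e, b) - B(a + e + 1, b)`,
which equals `B(a + e, b) (y - (a + e) / (a + b + e))` by `B(c + 1, b) = c / (c + b) · B(c, b)`.
The resulting signed sum is `n! Det` by the definition of the hyperdeterminant. -/

open MeasureTheory Set

lemma factorial_mul_hypDet {m n : ℕ} (M : (Fin m → Fin n) → ℝ) :
    (n ! : ℝ) * hypDet M = ∑ σ : Fin m → Equiv.Perm (Fin n),
      (∏ s, ((Equiv.Perm.sign (σ s) : ℤ) : ℝ)) * ∏ i, M fun s => σ s i := by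
  rw [hypDet, ← mul_assoc, mul_one_div_cancel (by positivity), one_mul]

lemma vandermonde_eq_det {n : ℕ} (x : Fin n → ℝ) :
    vandermonde x = (Matrix.vandermonde x).det := by
  rw [Matrix.det_vandermonde, vandermonde, Finset.prod_sigma']
  refine Finset.prod_bij' (fun p _ => ⟨p.1, p.2⟩) (fun s _ => (s.1, s.2)) ?_ ?_ ?_ ?_ ?_ <;>
    simp

lemma vandermonde_eq_sum_sign_mul_prod_pow {n : ℕ} (x : Fin n → ℝ) :
    vandermonde x = ∑ σ : Equiv.Perm (Fin n),
      ((Equiv.Perm.sign σ : ℤ) : ℝ) * ∏ i, x i ^ (σ i : ℕ) := by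
  rw [vandermonde_eq_det, ← Matrix.det_transpose, Matrix.det_apply']
  rfl

lemma vandermonde_pow_mul_prod {n : ℕ} (m : ℕ) (x w : Fin n → ℝ) :
    vandermonde x ^ m * ∏ i, w i
      = ∑ σ : Fin m → Equiv.Perm (Fin n),
          (∏ s, ((Equiv.Perm.sign (σ s) : ℤ) : ℝ)) * ∏ i, (w i * x i ^ ∑ s, (σ s i : ℕ)) := by
  rw [← Fin.prod_const, vandermonde_eq_sum_sign_mul_prod_pow, Finset.prod_univ_sum,
    Fintype.piFinset_univ, Finset.sum_mul]
  refine Finset.sum_congr rfl fun σ _ => ?_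
  simp_rw [Finset.prod_mul_distrib, Finset.prod_comm (s := Finset.univ (α := Fin m)),
    Finset.prod_pow_eq_pow_sum]
  ring

theorem integral_vandermonde_pow_mul_prod {n : ℕ} (m : ℕ) (μ : Measure ℝ) [SigmaFinite μ]
    (w : ℝ → ℝ) (hw : ∀ e : ℕ, Integrable (fun t => w t * t ^ e) μ) :
    ∫ x, vandermonde x ^ m * ∏ i, w (x i) ∂(Measure.pi fun _ : Fin n => μ)
      = n ! * hypDet (fun t : Fin m → Fin n => ∫ u, w u * u ^ (∑ s, (t s : ℕ)) ∂μ) := by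
  simp_rw [factorial_mul_hypDet, vandermonde_pow_mul_prod]
  rw [integral_finsetSum _ fun σ _ => (Integrable.fintype_prod fun i => hw _).const_mul _]
  refine Finset.sum_congr rfl fun σ _ => ?_
  rw [integral_const_mul, integral_fintype_prod_eq_prod
    (f := fun i t => w t * t ^ ∑ s, (σ s i : ℕ))]

lemma betaFn_eq_betaIntegral (c b : ℝ) : (betaFn c b : ℂ) = Complex.betaIntegral c b := by
  rw [betaFn, Complex.betaIntegral, ← intervalIntegral.integral_ofReal]
  refine intervalIntegral.integral_congr fun x hx => ?_
  rw [uIcc_of_le zero_le_one] at hx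
  push_cast
  rw [Complex.ofReal_cpow hx.1, Complex.ofReal_cpow (sub_nonneg.2 hx.2)]
  push_cast
  ring_nf

lemma betaFn_add_one {c b : ℝ} (hc : 0 < c) (hb : 0 < b) :
    betaFn (c + 1) b = c / (c + b) * betaFn c b := by
  have hc' : 0 < (c : ℂ).re := by simpa using hc
  have hb' : 0 < (b : ℂ).re := by simpa using hb
  have hcb : (c : ℂ) + b ≠ 0 := by exact_mod_cast (add_pos hc hb).ne'
  have hΓ : Complex.Gamma (c + b) ≠ 0 :=
    Complex.Gamma_ne_zero_of_re_pos (by simpa using add_pos hc hb)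
  have h₀ := Complex.Gamma_mul_Gamma_eq_betaIntegral hc' hb'
  have h₁ := Complex.Gamma_mul_Gamma_eq_betaIntegral (s := c + 1)
    (by simpa using hc.trans (lt_add_one c)) hb'
  rw [Complex.Gamma_add_one _ (by exact_mod_cast hc.ne'), add_right_comm,
    Complex.Gamma_add_one _ hcb] at h₁
  apply Complex.ofReal_injective
  push_cast
  rw [betaFn_eq_betaIntegral, betaFn_eq_betaIntegral]
  push_cast
  field_simp
  apply mul_left_cancel₀ hΓ
  linear_combination c * h₀ - h₁

lemma integrableOn_Ioc_rpow_mul_one_sub_rpow {c b : ℝ} (hc : 0 < c) (hb : 0 < b) :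
    IntegrableOn (fun x : ℝ => x ^ (c - 1) * (1 - x) ^ (b - 1)) (Ioc 0 1) := by
  have hC := Complex.betaIntegral_convergent (u := c) (v := b) (by simpa using hc)
    (by simpa using hb)
  rw [intervalIntegrable_iff_integrableOn_Ioc_of_le zero_le_one] at hC
  refine IntegrableOn.congr_fun (Complex.reCLM.integrable_comp hC) (fun x hx => ?_)
    measurableSet_Ioc
  have hreal : (x : ℂ) ^ ((c : ℂ) - 1) * (1 - (x : ℂ)) ^ ((b : ℂ) - 1)
      = ((x ^ (c - 1) * (1 - x) ^ (b - 1) : ℝ) : ℂ) := by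
    rw [Complex.ofReal_mul, Complex.ofReal_cpow hx.1.le, Complex.ofReal_cpow (sub_nonneg.2 hx.2)]
    push_cast
    rfl
  simp only [Complex.reCLM_apply, hreal, Complex.ofReal_re]

lemma betaFn_eq_integral_Ioc (c b : ℝ) :
    betaFn c b = ∫ x in Ioc 0 1, x ^ (c - 1) * (1 - x) ^ (b - 1) :=
  intervalIntegral.integral_of_le zero_le_one

lemma sub_mul_rpow_mul_one_sub_rpow_mul_pow {x : ℝ} (hx : x ≠ 0) (a b y : ℝ) (e : ℕ) :
    (y - x) * x ^ (a - 1) * (1 - x) ^ (b - 1) * x ^ e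
      = y * (x ^ (a + e - 1) * (1 - x) ^ (b - 1)) - x ^ (a + e + 1 - 1) * (1 - x) ^ (b - 1) := by
  rw [add_sub_cancel_right, add_sub_right_comm, Real.rpow_add_natCast hx,
    Real.rpow_add_natCast hx, Real.rpow_sub_one hx]
  field_simp

lemma integrableOn_aomoto_moment {a b : ℝ} (ha : 0 < a) (hb : 0 < b) (y : ℝ) (e : ℕ) :
    IntegrableOn (fun x : ℝ => (y - x) * x ^ (a - 1) * (1 - x) ^ (b - 1) * x ^ e) (Icc 0 1) := by
  rw [integrableOn_Icc_iff_integrableOn_Ioc]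
  refine IntegrableOn.congr_fun
    (((integrableOn_Ioc_rpow_mul_one_sub_rpow (by positivity) hb).const_mul y).sub
      (integrableOn_Ioc_rpow_mul_one_sub_rpow (by positivity) hb))
    (fun x hx => (sub_mul_rpow_mul_one_sub_rpow_mul_pow hx.1.ne' a b y e).symm) measurableSet_Ioc

lemma integral_aomoto_moment {a b : ℝ} (ha : 0 < a) (hb : 0 < b) (y : ℝ) (e : ℕ) :
    ∫ x in Icc 0 1, (y - x) * x ^ (a - 1) * (1 - x) ^ (b - 1) * x ^ e
      = betaFn (a + e) b * (y - (a + e) / (a + b + e)) := by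
  have hae : 0 < a + e := by positivity
  rw [integral_Icc_eq_integral_Ioc, setIntegral_congr_fun measurableSet_Ioc
      fun x hx => sub_mul_rpow_mul_one_sub_rpow_mul_pow hx.1.ne' a b y e,
    integral_sub ((integrableOn_Ioc_rpow_mul_one_sub_rpow hae hb).const_mul y)
      (integrableOn_Ioc_rpow_mul_one_sub_rpow (by positivity) hb),
    integral_const_mul, ← betaFn_eq_integral_Ioc, ← betaFn_eq_integral_Ioc, betaFn_add_one hae hb]
  ring

theorem aomoto_hyperdeterminant_general (n k : ℕ)
    (a b : ℝ) (ha : 0 < a) (hb : 0 < b) (y : ℝ) :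
    aomoto n k a b y =
      (n ! : ℝ) *
        hypDet (fun t : Fin (2 * k) → Fin n =>
          betaFn (a + ∑ s, (t s : ℕ)) b *
            (y - (a + ∑ s, (t s : ℕ)) / (a + b + ∑ s, (t s : ℕ)))) := by
  have hcube : (volume : Measure (Fin n → ℝ)).restrict (univ.pi fun _ => Icc 0 1)
      = Measure.pi fun _ => volume.restrict (Icc (0 : ℝ) 1) := by
    rw [volume_pi, Measure.restrict_pi_pi]
  rw [aomoto, hcube]
  refine (integral_vandermonde_pow_mul_prod (2 * k) _
    (fun x => (y - x) * x ^ (a - 1) * (1 - x) ^ (b - 1))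
    (integrableOn_aomoto_moment ha hb y)).trans ?_
  simp_rw [integral_aomoto_moment ha hb y]

/-- Hyperdeterminantal representation of Aomoto's integral:
`𝒜ₙ^{a,b;k}(y) = n! Det(B(a+s,b) (y - (a+s)/(a+b+s)))` with `s = i₁ + ⋯ + i₂ₖ`. -/
theorem aomoto_hyperdeterminant (n k : ℕ) (hn : 1 ≤ n) (hk : 1 ≤ k)
    (a b : ℝ) (ha : 0 < a) (hb : 0 < b) (y : ℝ) :
    aomoto n k a b y =
      (n ! : ℝ) *
        hypDet (fun t : Fin (2 * k) → Fin n =>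
          betaFn (a + ∑ s, (t s : ℕ)) b *
            (y - (a + ∑ s, (t s : ℕ)) / (a + b + ∑ s, (t s : ℕ)))) :=
  aomoto_hyperdeterminant_general n k a b ha hb y
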